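/- Let n, m, r be natural numbers and μ > 0, λ > 0 reals with μλ < 1/2, and let ε be a real with 0 < ε < 1. Let (W_s)_{s∈ℕ} and (G_s)_{s∈ℕ} be sequences of n×m real matrices satisfying W_{s+1} = (1 − 2μλ)·W_s − μ·G_s for all s, and rank(G_s) ≤ r for all s. Set k = ⌈log(1/ε)/(2μλ)⌉. Then for every t ≥ k there exists an n×m real matrix M with rank(M) ≤ r·k and ‖W_t − M‖_F ≤ ε · ‖W_{t−k}‖_F. -/

import Mathlib

/-!
Unrolling the recursion `k` times writes `W_t` as `(1 - 2μλ)^k • W_{t-k}` plus a linear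
combination of the `k` matrices `G_{t-k}, …, G_{t-1}`, which has rank at most `r k` by
subadditivity of rank. The remainder is small because `(1 - 2μλ)^k ≤ exp (-2μλ k) ≤ ε`
by the choice of `k`.
-/

/-- The Frobenius norm of an n×m real matrix. -/
noncomputable def frobNorm {n m : ℕ} (A : Matrix (Fin n) (Fin m) ℝ) : ℝ :=
  Real.sqrt (∑ i, ∑ j, (A i j) ^ 2)

namespace Matrix

variable {R ι κ : Type*} [Fintype κ]

theorem rank_add_le [Field R] (A B : Matrix ι κ R) : (A + B).rank ≤ A.rank + B.rank := by
  unfold Matrix.rank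
  rw [Matrix.mulVecLin_add]
  have h : LinearMap.range (A.mulVecLin + B.mulVecLin) ≤
      LinearMap.range A.mulVecLin ⊔ LinearMap.range B.mulVecLin := by
    rintro x ⟨v, rfl⟩
    exact Submodule.add_mem_sup (LinearMap.mem_range_self _ v) (LinearMap.mem_range_self _ v)
  exact (Submodule.finrank_mono h).trans (Submodule.finrank_add_le_finrank_add_finrank _ _)

theorem rank_smul_le [CommRing R] [StrongRankCondition R] (c : R) (A : Matrix ι κ R) :
    (c • A).rank ≤ A.rank := by
  classical
  rw [← Matrix.mul_one A, ← Matrix.mul_smul, Matrix.mul_one]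
  exact rank_mul_le_left _ _

theorem exists_iterate_eq_pow_smul_add_of_rank_le [Field R] {r : ℕ} (c μ : R)
    (W G : ℕ → Matrix ι κ R) (hW : ∀ s, W (s + 1) = c • W s - μ • G s)
    (hG : ∀ s, (G s).rank ≤ r) (s j : ℕ) :
    ∃ M : Matrix ι κ R, M.rank ≤ r * j ∧ W (s + j) = c ^ j • W s + M := by
  induction j with
  | zero => exact ⟨0, by simp⟩
  | succ j ih =>
    obtain ⟨M, hM, hWM⟩ := ih
    refine ⟨c • M + (-μ) • G (s + j), ?_, ?_⟩
    · calc (c • M + (-μ) • G (s + j)).rank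
          ≤ (c • M).rank + ((-μ) • G (s + j)).rank := rank_add_le _ _
        _ ≤ M.rank + (G (s + j)).rank := add_le_add (rank_smul_le _ _) (rank_smul_le _ _)
        _ ≤ r * (j + 1) := by rw [mul_add_one]; exact add_le_add hM (hG _)
    · rw [← add_assoc, hW, hWM, smul_add, smul_smul, ← pow_succ', neg_smul]
      abel

end Matrix

theorem frobNorm_smul {n m : ℕ} (c : ℝ) (A : Matrix (Fin n) (Fin m) ℝ) :
    frobNorm (c • A) = |c| * frobNorm A := by
  unfold frobNorm
  have h : ∑ i, ∑ j, ((c • A) i j) ^ 2 = c ^ 2 * ∑ i, ∑ j, (A i j) ^ 2 := by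
    simp_rw [Matrix.smul_apply, smul_eq_mul, mul_pow, Finset.mul_sum]
  rw [h, Real.sqrt_mul (sq_nonneg c), Real.sqrt_sq_eq_abs]

theorem one_sub_pow_le_of_log_inv_div_le {a ε : ℝ} {k : ℕ} (ha₀ : 0 < a) (ha₁ : a ≤ 1)
    (hε : 0 < ε) (hk : Real.log (1 / ε) / a ≤ k) : (1 - a) ^ k ≤ ε := by
  have hka : -Real.log ε ≤ k * a := by
    rwa [div_le_iff₀ ha₀, one_div, Real.log_inv] at hk
  calc (1 - a) ^ k ≤ Real.exp (-a) ^ k :=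
        pow_le_pow_left₀ (by linarith) (by linarith [Real.add_one_le_exp (-a)]) k
    _ = Real.exp (k * -a) := (Real.exp_nat_mul _ _).symm
    _ ≤ Real.exp (Real.log ε) := Real.exp_le_exp.mpr (by linarith)
    _ = ε := Real.exp_log hε

theorem stmt14_general {n m r : ℕ} (μ lam ε : ℝ) (hμ : 0 < μ) (hlam : 0 < lam)
    (hμlam : μ * lam < 1 / 2) (hε₀ : 0 < ε)
    (W G : ℕ → Matrix (Fin n) (Fin m) ℝ)
    (hW : ∀ s, W (s + 1) = (1 - 2 * μ * lam) • W s - μ • G s)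
    (hG : ∀ s, (G s).rank ≤ r)
    (k : ℕ) (hk : k = ⌈Real.log (1 / ε) / (2 * μ * lam)⌉₊) :
    ∀ t : ℕ, k ≤ t →
      ∃ M : Matrix (Fin n) (Fin m) ℝ, M.rank ≤ r * k ∧
        frobNorm (W t - M) ≤ ε * frobNorm (W (t - k)) := by
  intro t ht
  obtain ⟨M, hM, hWM⟩ :=
    Matrix.exists_iterate_eq_pow_smul_add_of_rank_le _ μ W G hW hG (t - k) k
  rw [Nat.sub_add_cancel ht] at hWM
  have hc : 0 ≤ 1 - 2 * μ * lam := by linarith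
  have hdecay : (1 - 2 * μ * lam) ^ k ≤ ε :=
    one_sub_pow_le_of_log_inv_div_le (by positivity) (by linarith) hε₀ (hk ▸ Nat.le_ceil _)
  refine ⟨M, hM, ?_⟩
  rw [hWM, add_sub_cancel_right, frobNorm_smul, abs_of_nonneg (pow_nonneg hc k)]
  exact mul_le_mul_of_nonneg_right hdecay (Real.sqrt_nonneg _)

/-- Under the recursion `W_{s+1} = (1−2μλ)·W_s − μ·G_s` with
`rank(G_s) ≤ r`, `μ, λ > 0`, `μλ < 1/2` and `0 < ε < 1`, setting
`k = ⌈log(1/ε)/(2μλ)⌉`, for every `t ≥ k` there is a matrix `M` with `rank(M) ≤ r·k` and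
`‖W_t − M‖_F ≤ ε · ‖W_{t−k}‖_F`. -/
theorem stmt14 {n m r : ℕ} (μ lam ε : ℝ) (hμ : 0 < μ) (hlam : 0 < lam)
    (hμlam : μ * lam < 1 / 2) (hε₀ : 0 < ε) (hε₁ : ε < 1)
    (W G : ℕ → Matrix (Fin n) (Fin m) ℝ)
    (hW : ∀ s, W (s + 1) = (1 - 2 * μ * lam) • W s - μ • G s)
    (hG : ∀ s, (G s).rank ≤ r)
    (k : ℕ) (hk : k = ⌈Real.log (1 / ε) / (2 * μ * lam)⌉₊) :
    ∀ t : ℕ, k ≤ t →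
      ∃ M : Matrix (Fin n) (Fin m) ℝ, M.rank ≤ r * k ∧
        frobNorm (W t - M) ≤ ε * frobNorm (W (t - k)) :=
  stmt14_general μ lam ε hμ hlam hμlam hε₀ W G hW hG k hk
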